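/- Let G be a finitely generated group. Then G is finite if and only if the set of tensors T⊗(G) = {[g,h^φ] : g,h ∈ G} ⊆ ν(G) is finite. -/

import Mathlib

open Monoid
open scoped commutatorElement

/-- A pair of compatible (right) actions of groups `G` and `H` on each other,
in the sense of Brown–Loday.  `aGH g h` denotes `g ^ h` and `aHG h g` denotes `h ^ g`. -/
structure CompatibleActions (G H : Type*) [Group G] [Group H] where
  aGH : G → H → G
  aHG : H → G → H
  aGH_one : ∀ g, aGH g 1 = g
  aGH_mul : ∀ g h₁ h₂, aGH g (h₁ * h₂) = aGH (aGH g h₁) h₂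
  aGH_hom : ∀ g₁ g₂ h, aGH (g₁ * g₂) h = aGH g₁ h * aGH g₂ h
  aHG_one : ∀ h, aHG h 1 = h
  aHG_mul : ∀ h g₁ g₂, aHG h (g₁ * g₂) = aHG (aHG h g₁) g₂
  aHG_hom : ∀ h₁ h₂ g, aHG (h₁ * h₂) g = aHG h₁ g * aHG h₂ g
  compat₁ : ∀ g g₁ h, aGH g (aHG h g₁) = g₁⁻¹ * aGH (g₁ * g * g₁⁻¹) h * g₁
  compat₂ : ∀ h h₁ g, aHG h (aGH g h₁) = h₁⁻¹ * aHG (h₁ * h * h₁⁻¹) g * h₁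

variable {G H : Type*} [Group G] [Group H]

/-- Relators of the group `η(G,H)`:
`[g,h^φ]^{g₁} = [g^{g₁}, (h^{g₁})^φ]` and `[g,h^φ]^{h₁^φ} = [g^{h₁}, (h^{h₁})^φ]`. -/
def etaRels (c : CompatibleActions G H) : Set (Coprod G H) :=
  let iG : G →* Coprod G H := Coprod.inl
  let iH : H →* Coprod G H := Coprod.inr
  (Set.range fun p : G × G × H =>
    ((iG p.1)⁻¹ * ⁅iG p.2.1, iH p.2.2⁆ * iG p.1) *
      ⁅iG (p.1⁻¹ * p.2.1 * p.1), iH (c.aHG p.2.2 p.1)⁆⁻¹) ∪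
  (Set.range fun p : H × G × H =>
    ((iH p.1)⁻¹ * ⁅iG p.2.1, iH p.2.2⁆ * iH p.1) *
      ⁅iG (c.aGH p.2.1 p.1), iH (p.1⁻¹ * p.2.2 * p.1)⁆⁻¹)

/-- The Brown–Loday group `η(G,H)`. -/
def EtaGroup (c : CompatibleActions G H) : Type _ :=
  Coprod G H ⧸ Subgroup.normalClosure (etaRels c)

instance (c : CompatibleActions G H) : Group (EtaGroup c) :=
  QuotientGroup.Quotient.group _

/-- The canonical map `G → η(G,H)`. -/
def etaG (c : CompatibleActions G H) : G →* EtaGroup c :=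
  (QuotientGroup.mk' _).comp Coprod.inl

/-- The canonical map `H → η(G,H)`, `h ↦ h^φ`. -/
def etaH (c : CompatibleActions G H) : H →* EtaGroup c :=
  (QuotientGroup.mk' _).comp Coprod.inr

/-- The set of tensors `T⊗(G,H) = {[g, h^φ]} ⊆ η(G,H)`. -/
def tensorSet (c : CompatibleActions G H) : Set (EtaGroup c) :=
  {x | ∃ g h, x = ⁅etaG c g, etaH c h⁆}

/-- The non-abelian tensor product `[G, H^φ] ≤ η(G,H)`. -/
def tensorSub (c : CompatibleActions G H) : Subgroup (EtaGroup c) :=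
  Subgroup.closure (tensorSet c)

/-- The compatible pair of conjugation actions of `G` on itself, giving `ν(G) = η(G,G)`. -/
def conjActions (G : Type*) [Group G] : CompatibleActions G G where
  aGH g h := h⁻¹ * g * h
  aHG h g := g⁻¹ * h * g
  aGH_one := by intro g; group
  aGH_mul := by intros; group
  aGH_hom := by intros; group
  aHG_one := by intro h; group
  aHG_mul := by intros; group
  aHG_hom := by intros; group
  compat₁ := by intros; group
  compat₂ := by intros; group

/-- `ν(G)`. -/
abbrev NuGroup (G : Type*) [Group G] := EtaGroup (conjActions G)

/-- A group is locally finite if all its finitely generated subgroups are finite. -/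
def IsLocallyFiniteGroup (K : Type*) [Group K] : Prop :=
  ∀ S : Subgroup K, S.FG → Finite S


/-! ### Auxiliary material -/

section Aux

/-- The discrete Heisenberg group. -/
@[ext] structure Heis : Type where
  x : ℤ
  y : ℤ
  z : ℤ

namespace Heis

protected def hmul (a b : Heis) : Heis := ⟨a.x + b.x, a.y + b.y, a.z + b.z + a.x * b.y⟩
protected def hinv (a : Heis) : Heis := ⟨-a.x, -a.y, -a.z + a.x * a.y⟩

instance : Group Heis where
  mul := Heis.hmul
  one := ⟨0, 0, 0⟩
  inv := Heis.hinv
  mul_assoc a b c := by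
    show Heis.hmul (Heis.hmul a b) c = Heis.hmul a (Heis.hmul b c)
    simp only [Heis.hmul, Heis.mk.injEq]
    refine ⟨by ring, by ring, by ring⟩
  one_mul a := by
    show Heis.hmul ⟨0, 0, 0⟩ a = a
    simp only [Heis.hmul]
    ext <;> simp
  mul_one a := by
    show Heis.hmul a ⟨0, 0, 0⟩ = a
    simp only [Heis.hmul]
    ext <;> simp
  inv_mul_cancel a := by
    show Heis.hmul (Heis.hinv a) a = ⟨0, 0, 0⟩
    simp only [Heis.hmul, Heis.hinv, Heis.mk.injEq]
    refine ⟨by ring, by ring, by ring⟩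

lemma mul_def (a b : Heis) : a * b = ⟨a.x + b.x, a.y + b.y, a.z + b.z + a.x * b.y⟩ := rfl
lemma inv_def (a : Heis) : a⁻¹ = ⟨-a.x, -a.y, -a.z + a.x * a.y⟩ := rfl
lemma one_def : (1 : Heis) = ⟨0, 0, 0⟩ := rfl

lemma comm_xy (a b : ℤ) :
    ⁅(⟨a, 0, 0⟩ : Heis), (⟨0, b, 0⟩ : Heis)⁆ = ⟨0, 0, a * b⟩ := by
  simp only [commutatorElement_def, mul_def, inv_def, Heis.mk.injEq]
  refine ⟨by ring, by ring, by ring⟩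

lemma central_conj (w : Heis) (z : ℤ) : w⁻¹ * ⟨0, 0, z⟩ * w = ⟨0, 0, z⟩ := by
  simp only [mul_def, inv_def, Heis.mk.injEq]
  refine ⟨by ring, by ring, by ring⟩

lemma conj_x (c a : ℤ) :
    (⟨c, 0, 0⟩ : Heis)⁻¹ * ⟨a, 0, 0⟩ * ⟨c, 0, 0⟩ = ⟨a, 0, 0⟩ := by
  simp only [mul_def, inv_def, Heis.mk.injEq]
  refine ⟨by ring, by ring, by ring⟩

lemma conj_y (c b : ℤ) :
    (⟨0, c, 0⟩ : Heis)⁻¹ * ⟨0, b, 0⟩ * ⟨0, c, 0⟩ = ⟨0, b, 0⟩ := by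
  simp only [mul_def, inv_def, Heis.mk.injEq]
  refine ⟨by ring, by ring, by ring⟩

end Heis

variable {K : Type*} [Group K]

lemma p_one (p : G → ℤ) (hp : ∀ a b, p (a * b) = p a + p b) : p 1 = 0 := by
  have := hp 1 1; rw [mul_one] at this; omega

lemma p_inv (p : G → ℤ) (hp : ∀ a b, p (a * b) = p a + p b) (a : G) : p a⁻¹ = -p a := by
  have h := hp a⁻¹ a
  rw [inv_mul_cancel, p_one p hp] at h
  omega

lemma p_conj (p : G → ℤ) (hp : ∀ a b, p (a * b) = p a + p b) (c a : G) :
    p (c⁻¹ * a * c) = p a := by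
  rw [hp, hp, p_inv p hp]
  omega

/-- The homomorphism `g ↦ (p g, 0, 0)` into the Heisenberg group. -/
def heisA (p : G → ℤ) (hp : ∀ a b, p (a * b) = p a + p b) : G →* Heis where
  toFun g := ⟨p g, 0, 0⟩
  map_one' := by
    show (⟨p 1, 0, 0⟩ : Heis) = 1
    rw [p_one p hp]; rfl
  map_mul' a b := by
    show (⟨p (a * b), 0, 0⟩ : Heis) = ⟨p a, 0, 0⟩ * ⟨p b, 0, 0⟩
    simp only [Heis.mul_def, hp, Heis.mk.injEq]
    refine ⟨trivial, by ring, by ring⟩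

/-- The homomorphism `h ↦ (0, p h, 0)` into the Heisenberg group. -/
def heisB (p : G → ℤ) (hp : ∀ a b, p (a * b) = p a + p b) : G →* Heis where
  toFun g := ⟨0, p g, 0⟩
  map_one' := by
    show (⟨0, p 1, 0⟩ : Heis) = 1
    rw [p_one p hp]; rfl
  map_mul' a b := by
    show (⟨0, p (a * b), 0⟩ : Heis) = ⟨0, p a, 0⟩ * ⟨0, p b, 0⟩
    simp only [Heis.mul_def, hp, Heis.mk.injEq]
    refine ⟨by ring, trivial, by ring⟩

/-- Lifting a pair of homomorphisms satisfying the `η`-relations to `η(G,H)`. -/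
def etaLift (c : CompatibleActions G H) (f₁ : G →* K) (f₂ : H →* K)
    (r₁ : ∀ g₁ g h, (f₁ g₁)⁻¹ * ⁅f₁ g, f₂ h⁆ * f₁ g₁
        = ⁅(f₁ g₁)⁻¹ * f₁ g * f₁ g₁, f₂ (c.aHG h g₁)⁆)
    (r₂ : ∀ h₁ g h, (f₂ h₁)⁻¹ * ⁅f₁ g, f₂ h⁆ * f₂ h₁
        = ⁅f₁ (c.aGH g h₁), (f₂ h₁)⁻¹ * f₂ h * f₂ h₁⁆) :
    EtaGroup c →* K :=
  QuotientGroup.lift _ (Coprod.lift f₁ f₂) (by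
    have hle : Subgroup.normalClosure (etaRels c) ≤ (Coprod.lift f₁ f₂).ker := by
      apply Subgroup.normalClosure_le_normal
      intro x hx
      simp only [etaRels, Set.mem_union, Set.mem_range, Prod.exists] at hx
      rcases hx with ⟨g₁, g, h, rfl⟩ | ⟨h₁, g, h, rfl⟩ <;>
        simp only [SetLike.mem_coe, MonoidHom.mem_ker, map_mul, map_inv,
          map_commutatorElement, Coprod.lift_apply_inl, Coprod.lift_apply_inr]
      · rw [r₁ g₁ g h]; exact mul_inv_cancel _
      · rw [r₂ h₁ g h]; exact mul_inv_cancel _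
    exact hle)

lemma etaLift_etaG (c : CompatibleActions G H) (f₁ : G →* K) (f₂ : H →* K)
    (r₁) (r₂) (g : G) : etaLift c f₁ f₂ r₁ r₂ (etaG c g) = f₁ g := by
  show QuotientGroup.lift _ _ _ (QuotientGroup.mk (Coprod.inl g)) = f₁ g
  rw [QuotientGroup.lift_mk, Coprod.lift_apply_inl]

lemma etaLift_etaH (c : CompatibleActions G H) (f₁ : G →* K) (f₂ : H →* K)
    (r₁) (r₂) (h : H) : etaLift c f₁ f₂ r₁ r₂ (etaH c h) = f₂ h := by
  show QuotientGroup.lift _ _ _ (QuotientGroup.mk (Coprod.inr h)) = f₂ h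
  rw [QuotientGroup.lift_mk, Coprod.lift_apply_inr]

/-- The canonical homomorphism `ν(G) → G`, `g, g^φ ↦ g`. -/
def nuToG (G : Type*) [Group G] : NuGroup G →* G :=
  etaLift (conjActions G) (MonoidHom.id G) (MonoidHom.id G)
    (by
      intro g₁ g h
      simp only [MonoidHom.id_apply, conjActions, commutatorElement_def]
      group)
    (by
      intro h₁ g h
      simp only [MonoidHom.id_apply, conjActions, commutatorElement_def]
      group)

lemma nuToG_tensor {G : Type*} [Group G] (g h : G) :
    nuToG G ⁅etaG (conjActions G) g, etaH (conjActions G) h⁆ = ⁅g, h⁆ := by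
  rw [map_commutatorElement, nuToG, etaLift_etaG, etaLift_etaH]
  rfl

/-- The homomorphism `ν(G) → Heis` induced by an additive character `p` of `G`. -/
def nuToHeis (p : G → ℤ) (hp : ∀ a b, p (a * b) = p a + p b) : NuGroup G →* Heis :=
  etaLift (conjActions G) (heisA p hp) (heisB p hp)
    (by
      intro g₁ g h
      show (⟨p g₁, 0, 0⟩ : Heis)⁻¹ * ⁅(⟨p g, 0, 0⟩ : Heis), (⟨0, p h, 0⟩ : Heis)⁆ *
          ⟨p g₁, 0, 0⟩ =
        ⁅(⟨p g₁, 0, 0⟩ : Heis)⁻¹ * ⟨p g, 0, 0⟩ * ⟨p g₁, 0, 0⟩,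
          (⟨0, p (g₁⁻¹ * h * g₁), 0⟩ : Heis)⁆
      rw [Heis.comm_xy, Heis.central_conj, Heis.conj_x, p_conj p hp, Heis.comm_xy]
    )
    (by
      intro h₁ g h
      show (⟨0, p h₁, 0⟩ : Heis)⁻¹ * ⁅(⟨p g, 0, 0⟩ : Heis), (⟨0, p h, 0⟩ : Heis)⁆ *
          ⟨0, p h₁, 0⟩ =
        ⁅(⟨p (h₁⁻¹ * g * h₁), 0, 0⟩ : Heis),
          (⟨0, p h₁, 0⟩ : Heis)⁻¹ * ⟨0, p h, 0⟩ * ⟨0, p h₁, 0⟩⁆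
      rw [Heis.comm_xy, Heis.central_conj, Heis.conj_y, p_conj p hp, Heis.comm_xy]
    )

lemma nuToHeis_tensor (p : G → ℤ) (hp : ∀ a b, p (a * b) = p a + p b) (g h : G) :
    nuToHeis p hp ⁅etaG (conjActions G) g, etaH (conjActions G) h⁆
      = ⟨0, 0, p g * p h⟩ := by
  rw [map_commutatorElement, nuToHeis, etaLift_etaG, etaLift_etaH]
  exact Heis.comm_xy _ _

end Aux

/-- A finitely generated group `G` is finite iff the set of tensors
`T⊗(G) = {[g,h^φ]} ⊆ ν(G)` is finite. -/
theorem finite_iff_tensorSet_finite {G : Type*} [Group G] [Group.FG G] :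
    Finite G ↔ (tensorSet (conjActions G)).Finite := by
  constructor
  · intro hG
    have h : tensorSet (conjActions G) =
        Set.range fun q : G × G => ⁅etaG (conjActions G) q.1, etaH (conjActions G) q.2⁆ := by
      ext x
      simp only [tensorSet, Set.mem_setOf_eq, Set.mem_range, Prod.exists]
      constructor
      · rintro ⟨g, h, rfl⟩; exact ⟨g, h, rfl⟩
      · rintro ⟨g, h, rfl⟩; exact ⟨g, h, rfl⟩
    rw [h]
    exact Set.finite_range _
  · intro ht
    -- Step 1: the commutator subgroup of `G` is finite (Schur's theorem).
    have hcs : (commutatorSet G).Finite := by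
      have hsub : commutatorSet G ⊆ nuToG G '' tensorSet (conjActions G) := by
        rintro x ⟨g, h, rfl⟩
        exact ⟨⁅etaG (conjActions G) g, etaH (conjActions G) h⁆, ⟨g, h, rfl⟩,
          nuToG_tensor g h⟩
      exact (ht.image _).subset hsub
    haveI : Finite (commutatorSet G) := hcs.to_subtype
    haveI hcomm : Finite (_root_.commutator G) := inferInstance
    -- Step 2: the abelianization of `G` is finite.
    have hofsurj : Function.Surjective (Abelianization.of (G := G)) :=
      fun x => Quotient.inductionOn x fun g => ⟨g, rfl⟩
    haveI : Group.FG (Abelianization G) := Group.fg_of_surjective hofsurj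
    obtain ⟨n, ι, fι, pr, hpr, e, ⟨f⟩⟩ :=
      AddCommGroup.equiv_free_prod_directSum_zmod (Additive (Abelianization G))
    haveI hAb : Finite (Abelianization G) := by
      rcases n with _ | m
      · -- free rank zero: the abelianization is finite
        haveI : Finite (Fin 0 →₀ ℤ) := Finite.of_equiv _ Finsupp.equivFunOnFinite.symm
        haveI : ∀ i, Finite (ZMod (pr i ^ e i)) := fun i => by
          haveI : NeZero (pr i ^ e i) := ⟨pow_ne_zero _ (hpr i).ne_zero⟩
          infer_instance
        haveI : Finite (DirectSum ι fun i => ZMod (pr i ^ e i)) :=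
          Finite.of_equiv _ DFinsupp.equivFunOnFintype.symm
        haveI : Finite (Additive (Abelianization G)) := Finite.of_equiv _ f.toEquiv.symm
        exact Finite.of_equiv _ Additive.toMul
      · -- positive free rank: contradiction with finiteness of the tensor set
        exfalso
        set p : G → ℤ := fun g => (f (Additive.ofMul (Abelianization.of g))).1 0 with hpdef
        have hp : ∀ a b, p (a * b) = p a + p b := by
          intro a b
          simp only [hpdef, map_mul, ofMul_mul, map_add, Prod.fst_add, Finsupp.add_apply]
        have hsurj : ∀ k : ℤ, ∃ g : G, p g = k := by
          intro k
          obtain ⟨g, hg⟩ := hofsurj (Additive.toMul (f.symm (Finsupp.single 0 k, 0)))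
          refine ⟨g, ?_⟩
          simp only [hpdef, hg]
          rw [show Additive.ofMul (Additive.toMul (f.symm (Finsupp.single 0 k, 0)))
              = f.symm (Finsupp.single 0 k, 0) from rfl]
          rw [AddEquiv.apply_symm_apply]
          exact Finsupp.single_eq_same
        have hinf : (nuToHeis p hp '' tensorSet (conjActions G)).Infinite := by
          apply Set.infinite_of_injective_forall_mem
            (f := fun k : ℕ => (⟨0, 0, (k : ℤ)⟩ : Heis))
          · intro a b hab
            have := congrArg Heis.z hab
            simpa using this
          · intro k
            obtain ⟨g, hg⟩ := hsurj (k : ℤ)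
            obtain ⟨h, hh⟩ := hsurj 1
            refine ⟨⁅etaG (conjActions G) g, etaH (conjActions G) h⁆, ⟨g, h, rfl⟩, ?_⟩
            rw [nuToHeis_tensor, hg, hh, mul_one]
        exact hinf (ht.image _)
    -- Step 3: conclude.
    haveI : Finite (G ⧸ _root_.commutator G) := hAb
    exact Finite.of_equiv _ (Subgroup.groupEquivQuotientProdSubgroup (s := _root_.commutator G)).symm
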